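/- Let G0' be the subgraph of the house graph induced by vertices {w1,w2,w3,w4,w5}, i.e., the 5-cycle w1w2w3w4w5 plus chord w2w5. In every (1,2,2,2,2)-packing edge-coloring of the house graph G0, at least two edges of G0' receive color 1. -/
import Mathlib


open SimpleGraph

/-- The distance between two edges: the minimum, over endpoints `a` of `e` and `b` of `f`,
of the vertex distance between `a` and `b` (as an extended natural number,
`⊤` when no endpoints are connected). -/
noncomputable def edgeDist {V : Type*} (G : SimpleGraph V) (e f : Sym2 V) : ℕ∞ :=
  sInf {d : ℕ∞ | ∃ a ∈ e, ∃ b ∈ f, G.edist a b = d}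

/-- An `S`-packing edge-coloring (in the closest-endpoint vertex-distance convention):
a map `c` assigning to each edge a color `i : Fin k` such that any two distinct
same-colored edges are at edge-distance at least `S i`.  A class with `S i = 1` is a
matching, `S i = 2` an induced matching, etc. -/
def IsPackingEdgeColoring {V : Type*} (G : SimpleGraph V) {k : ℕ} (S : Fin k → ℕ)
    (c : Sym2 V → Fin k) : Prop :=
  ∀ e ∈ G.edgeSet, ∀ f ∈ G.edgeSet, e ≠ f → c e = c f →
    (S (c e) : ℕ∞) ≤ edgeDist G e f

/-- The house graph $G_0$. -/
def G0 : SimpleGraph (Fin 7) :=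
  SimpleGraph.fromRel (fun a b =>
    (a, b) ∈ ([(0,1),(1,2),(2,3),(3,4),(0,4),(1,4),(2,5),(3,6)] : List (Fin 7 × Fin 7)))

/-- The edges of $G_0'$, the 5-cycle $w_1\cdots w_5$ plus the chord $w_2w_5$. -/
def G0'edges : Set (Sym2 (Fin 7)) :=
  {s(0,1), s(1,2), s(2,3), s(3,4), s(0,4), s(1,4)}

instance : DecidableRel G0.Adj := fun a b =>
  decidable_of_iff _ (SimpleGraph.fromRel_adj _ a b).symm

lemma edl (a b x y : Fin 7)
    (h : (G0.Adj a x ∨ a = x) ∨ (G0.Adj a y ∨ a = y) ∨ (G0.Adj b x ∨ b = x) ∨ (G0.Adj b y ∨ b = y)) :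
    edgeDist G0 s(a,b) s(x,y) ≤ 1 := by
  have key : ∀ u v : Fin 7, u ∈ (s(a,b) : Sym2 (Fin 7)) → v ∈ (s(x,y) : Sym2 (Fin 7)) →
      (G0.Adj u v ∨ u = v) → edgeDist G0 s(a,b) s(x,y) ≤ 1 := by
    intro u v hu hv huv
    refine le_trans (sInf_le ⟨u, hu, v, hv, rfl⟩) ?_
    rcases huv with h | rfl
    · exact le_of_eq (edist_eq_one_iff_adj.mpr h)
    · simp [edist_self]
  rcases h with h | h | h | h
  · exact key a x (by simp) (by simp) h
  · exact key a y (by simp) (by simp) h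
  · exact key b x (by simp) (by simp) h
  · exact key b y (by simp) (by simp) h

/-- In every $(1,2^4)$-packing edge-coloring of the house graph, at least two edges
of $G_0'$ receive the matching color. -/
theorem stmt4 : ∀ c : Sym2 (Fin 7) → Fin 5,
    IsPackingEdgeColoring G0 ![1,2,2,2,2] c →
    ∃ e f, e ≠ f ∧ e ∈ G0'edges ∧ f ∈ G0'edges ∧ c e = 0 ∧ c f = 0 := by
  intro c hc
  set s : Finset (Sym2 (Fin 7)) :=
    {s(0,1), s(1,2), s(2,3), s(3,4), s(0,4), s(1,4)} with hs
  have hmemG : ∀ e ∈ s, e ∈ G0.edgeSet := by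
    intro e he
    fin_cases he <;> (rw [SimpleGraph.mem_edgeSet]; decide)
  have hmem' : ∀ e ∈ s, e ∈ G0'edges := by
    intro e he
    fin_cases he <;> simp [G0'edges]
  have hcard : (Finset.univ : Finset (Fin 5)).card < s.card := by decide
  obtain ⟨e, he, f, hf, hne, hcef⟩ :=
    Finset.exists_ne_map_eq_of_card_lt_of_maps_to hcard
      (fun e _ => Finset.mem_univ (c e))
  have h1 : ((![1,2,2,2,2] (c e) : ℕ) : ℕ∞) ≤ edgeDist G0 e f :=
    hc e (hmemG e he) f (hmemG f hf) hne hcef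
  have hd : edgeDist G0 e f ≤ 1 := by
    fin_cases he <;> fin_cases hf <;>
      first
        | exact absurd rfl hne
        | exact edl _ _ _ _ (by decide)
  have hce : c e = 0 := by
    by_contra h0
    have h2 : ![1,2,2,2,2] (c e) = 2 := by
      have : ∀ i : Fin 5, i ≠ 0 → ![1,2,2,2,2] i = 2 := by decide
      exact this _ h0
    rw [h2] at h1
    exact absurd (le_trans h1 hd) (by decide)
  exact ⟨e, f, hne, hmem' e he, hmem' f hf, hce, hcef ▸ hce⟩
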